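/- Let ρ_{SE} be a density matrix on ℂ^{d_S} ⊗ ℂ^{d_E} (pure or mixed) whose reduced state ρ_S = Tr_E ρ_{SE} is positive definite, with d_S ≥ 2. Then for every Hermitian matrix H on ℂ^{d_S} ⊗ ℂ^{d_E}, the entropy rate is bounded by |Tr(H·[log₂(ρ_S) ⊗ I_E, ρ_{SE}])| ≤ 4·‖H‖_∞·log₂(d_S). -/

import Mathlib

open scoped Kronecker ComplexOrder
open Matrix MeasureTheory

noncomputable section

/-- The trace norm `‖A‖₁ = Tr √(AᴴA)`. -/
def traceNorm {n : Type*} [Fintype n] [DecidableEq n] (A : Matrix n n ℂ) : ℝ :=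
  (((Matrix.posSemidef_conjTranspose_mul_self A).1.eigenvectorUnitary.1 *
      diagonal (((↑) : ℝ → ℂ) ∘ (√·) ∘ (Matrix.posSemidef_conjTranspose_mul_self A).1.eigenvalues) *
      (star (Matrix.posSemidef_conjTranspose_mul_self A).1.eigenvectorUnitary : Matrix n n ℂ)).trace).re

/-- The operator (spectral) norm `‖A‖_∞`. -/
def opNorm {n : Type*} [Fintype n] [DecidableEq n] (A : Matrix n n ℂ) : ℝ :=
  ‖Matrix.toEuclideanCLM (𝕜 := ℂ) A‖

/-- The partial trace over the second tensor factor. -/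
def ptrace2 {m e : Type*} [Fintype e] (ρ : Matrix (m × e) (m × e) ℂ) : Matrix m m ℂ :=
  Matrix.of fun i j => ∑ k, ρ (i, k) (j, k)

/-- The binary logarithm `log₂` of a Hermitian matrix, via the spectral functional
calculus (junk value `0` on non-Hermitian input). -/
def matLog2 {n : Type*} [Fintype n] [DecidableEq n] (A : Matrix n n ℂ) : Matrix n n ℂ :=
  if hA : A.IsHermitian then hA.cfc (Real.logb 2) else 0

/-- The commutator `[A, B] = A·B − B·A`. -/
def mcomm {n : Type*} [Fintype n] (A B : Matrix n n ℂ) : Matrix n n ℂ :=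
  A * B - B * A

/-! Shifting `log₂ ρ_S` by the scalar `log₂ d_S` does not change the commutator, so the rate is
`Tr(H K ρ) - Tr(H ρ K)` with `K = (log₂ ρ_S + log₂ d_S) ⊗ I`. Both terms are inner products for the
`ρ`-weighted Hilbert–Schmidt form `⟪X, Y⟫ = Tr(Y ρ Xᴴ)`, so by Cauchy–Schwarz each is at most
`‖H‖_∞ √Tr(K² ρ)`, and `Tr(K² ρ) = Tr((log₂ ρ_S + log₂ d_S)² ρ_S) = ∑ λᵢ log₂²(d_S λᵢ)` over the
eigenvalues of `ρ_S`. Since `μ log₂² μ ≤ 3` on `(0, 1]`, this sum is at most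
`log₂² d_S + 3 ≤ 4 log₂² d_S`. -/

namespace Real

lemma mul_log_sq_le_one {μ : ℝ} (h0 : 0 < μ) (h1 : μ ≤ 1) : μ * log μ ^ 2 ≤ 1 := by
  set y := -log μ / 2
  have hy : 0 ≤ y := by have := log_nonpos h0.le h1; simp only [y]; linarith
  have hμ : μ = exp (-y) ^ 2 := by
    rw [sq, ← exp_add, show -y + -y = log μ by simp only [y]; ring, exp_log h0]
  have hlog : log μ = -2 * y := by simp only [y]; ring
  have he : exp (-1) ≤ 1 / 2 := by
    rw [exp_neg, inv_le_comm₀ (exp_pos 1) (by norm_num)]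
    linarith [add_one_le_exp (1 : ℝ)]
  have key := mul_exp_neg_le_exp_neg_one y
  have hnn : 0 ≤ y * exp (-y) := by positivity
  calc μ * log μ ^ 2 = 4 * (y * exp (-y)) ^ 2 := by rw [hlog, hμ]; ring
    _ ≤ 4 * (1 / 2) ^ 2 := by gcongr; linarith
    _ = 1 := by norm_num

lemma mul_logb_two_sq_le_three {μ : ℝ} (h0 : 0 < μ) (h1 : μ ≤ 1) : μ * logb 2 μ ^ 2 ≤ 3 := by
  have hl2 := log_two_gt_d9
  rw [logb, div_pow, mul_div_assoc', div_le_iff₀ (by positivity)]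
  nlinarith [mul_log_sq_le_one h0 h1]

lemma mul_logb_mul_sq_le_add {x d : ℝ} (hx0 : 0 < x) (hx1 : x ≤ 1) (hd : 1 ≤ d) :
    x * logb 2 (x * d) ^ 2 ≤ x * logb 2 d ^ 2 + 3 / d := by
  have hd0 : 0 < d := by linarith
  rcases le_or_gt 1 (x * d) with h | h
  · have h0 : 0 ≤ logb 2 (x * d) := logb_nonneg one_lt_two h
    have hle : logb 2 (x * d) ≤ logb 2 d :=
      logb_le_logb_of_le one_lt_two (by positivity) (by nlinarith)
    have : 0 ≤ 3 / d := by positivity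
    have : logb 2 (x * d) ^ 2 ≤ logb 2 d ^ 2 := by gcongr
    nlinarith
  · have key := mul_logb_two_sq_le_three (by positivity) h.le
    have : x * logb 2 (x * d) ^ 2 ≤ 3 / d := by
      rw [le_div_iff₀ hd0]; linarith
    nlinarith [sq_nonneg (logb 2 d)]

theorem sum_mul_logb_add_logb_card_sq_le {ι : Type*} [Fintype ι] (hcard : 2 ≤ Fintype.card ι)
    (p : ι → ℝ) (hp : ∀ i, 0 < p i) (hsum : ∑ i, p i = 1) :
    ∑ i, p i * (logb 2 (p i) + logb 2 (Fintype.card ι)) ^ 2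
      ≤ 4 * logb 2 (Fintype.card ι) ^ 2 := by
  have hd : (2 : ℝ) ≤ Fintype.card ι := by exact_mod_cast hcard
  set d : ℝ := (Fintype.card ι : ℝ)
  have hC : 1 ≤ logb 2 d := by
    rw [← logb_self_eq_one one_lt_two]; exact logb_le_logb_of_le one_lt_two two_pos hd
  have hp1 (i : ι) : p i ≤ 1 :=
    hsum ▸ Finset.single_le_sum (fun j _ => (hp j).le) (Finset.mem_univ i)
  calc ∑ i, p i * (logb 2 (p i) + logb 2 d) ^ 2
      = ∑ i, p i * logb 2 (p i * d) ^ 2 := by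
        refine Finset.sum_congr rfl fun i _ => ?_
        rw [logb_mul (hp i).ne' (by positivity)]
    _ ≤ ∑ i, (p i * logb 2 d ^ 2 + 3 / d) :=
        Finset.sum_le_sum fun i _ => mul_logb_mul_sq_le_add (hp i) (hp1 i) (by linarith)
    _ = logb 2 d ^ 2 + 3 := by
        rw [Finset.sum_add_distrib, ← Finset.sum_mul, hsum, Finset.sum_const, Finset.card_univ,
          nsmul_eq_mul]
        field_simp
        ring
    _ ≤ 4 * logb 2 d ^ 2 := by nlinarith

end Real

namespace Matrix

theorem IsHermitian.kronecker {m n : Type*} {A : Matrix m m ℂ} {B : Matrix n n ℂ}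
    (hA : A.IsHermitian) (hB : B.IsHermitian) : (A ⊗ₖ B).IsHermitian := by
  rw [IsHermitian, conjTranspose_kronecker, hA.eq, hB.eq]

variable {n : Type*} [Fintype n]

theorem norm_trace_mul_mul_conjTranspose_le {ρ : Matrix n n ℂ} (hρ : ρ.PosSemidef)
    (X Y : Matrix n n ℂ) :
    ‖(X * ρ * Yᴴ).trace‖ ≤ √(X * ρ * Xᴴ).trace.re * √(Y * ρ * Yᴴ).trace.re := by
  let _ := ρ.toMatrixSeminormedAddCommGroup hρ
  let _ := ρ.toMatrixInnerProductSpace hρ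
  rw [mul_comm]
  exact norm_inner_le_norm (𝕜 := ℂ) Y X

open scoped MatrixOrder Matrix.Norms.L2Operator in
theorem re_trace_mul_mul_conjTranspose_le [DecidableEq n] {ρ : Matrix n n ℂ} (hρ : ρ.PosSemidef)
    (H : Matrix n n ℂ) :
    (H * ρ * Hᴴ).trace.re ≤ opNorm H ^ 2 * ρ.trace.re := by
  obtain ⟨B, rfl⟩ := CStarAlgebra.nonneg_iff_eq_star_mul_self.mp hρ.nonneg
  have hle := star_right_conjugate_le_conjugate
    (CStarAlgebra.star_mul_le_algebraMap_norm_sq (a := H)) B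
  have h := Complex.re_le_re ((le_iff.mp hle).trace_nonneg)
  have hcyc : (H * (star B * B) * Hᴴ).trace = (B * (star H * H) * star B).trace := by
    rw [show H * (star B * B) * Hᴴ = (H * star B) * (B * Hᴴ) by simp only [mul_assoc],
      trace_mul_comm]
    simp only [mul_assoc, star_eq_conjTranspose]
  rw [trace_sub, Complex.sub_re, Complex.zero_re, sub_nonneg, Algebra.algebraMap_eq_smul_one,
    mul_smul_comm, mul_one, smul_mul_assoc, trace_smul, Complex.real_smul,
    Complex.re_ofReal_mul] at h
  rwa [hcyc, trace_mul_comm (star B)]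

theorem norm_trace_mul_mcomm_le [DecidableEq n] {H K ρ : Matrix n n ℂ} (hH : H.IsHermitian)
    (hK : K.IsHermitian) (hρ : ρ.PosSemidef) :
    ‖(H * mcomm K ρ).trace‖ ≤ 2 * opNorm H * √ρ.trace.re * √(K * K * ρ).trace.re := by
  have hKρH : (H * (K * ρ)).trace = (K * ρ * Hᴴ).trace := by rw [hH.eq, trace_mul_comm]
  have hHρK : (H * (ρ * K)).trace = (H * ρ * Kᴴ).trace := by rw [hK.eq, mul_assoc]
  have hKρK : (K * ρ * Kᴴ).trace = (K * K * ρ).trace := by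
    rw [hK.eq, trace_mul_comm, mul_assoc]
  have hHρH : √(H * ρ * Hᴴ).trace.re ≤ opNorm H * √ρ.trace.re := by
    have h0 : 0 ≤ opNorm H := norm_nonneg _
    rw [← Real.sqrt_sq h0, ← Real.sqrt_mul (sq_nonneg _)]
    exact Real.sqrt_le_sqrt (re_trace_mul_mul_conjTranspose_le hρ H)
  calc ‖(H * mcomm K ρ).trace‖ = ‖(K * ρ * Hᴴ).trace - (H * ρ * Kᴴ).trace‖ := by
        rw [mcomm, mul_sub, trace_sub, hKρH, hHρK]
    _ ≤ ‖(K * ρ * Hᴴ).trace‖ + ‖(H * ρ * Kᴴ).trace‖ := norm_sub_le _ _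
    _ ≤ √(K * ρ * Kᴴ).trace.re * √(H * ρ * Hᴴ).trace.re
          + √(H * ρ * Hᴴ).trace.re * √(K * ρ * Kᴴ).trace.re :=
        add_le_add (norm_trace_mul_mul_conjTranspose_le hρ K H)
          (norm_trace_mul_mul_conjTranspose_le hρ H K)
    _ = 2 * √(H * ρ * Hᴴ).trace.re * √(K * K * ρ).trace.re := by rw [hKρK]; ring
    _ ≤ 2 * (opNorm H * √ρ.trace.re) * √(K * K * ρ).trace.re := by gcongr
    _ = 2 * opNorm H * √ρ.trace.re * √(K * K * ρ).trace.re := by ring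

theorem trace_kronecker_one_mul {m e : Type*} [Fintype m] [Fintype e] [DecidableEq e]
    (X : Matrix m m ℂ) (ρ : Matrix (m × e) (m × e) ℂ) :
    ((X ⊗ₖ (1 : Matrix e e ℂ)) * ρ).trace = (X * ptrace2 ρ).trace := by
  simp only [trace, diag, mul_apply, kroneckerMap_apply, one_apply, ptrace2, of_apply,
    Fintype.sum_prod_type, mul_ite, mul_one, mul_zero, ite_mul, zero_mul, Finset.sum_ite_eq,
    Finset.mem_univ, if_true, Finset.mul_sum]
  exact Finset.sum_congr rfl fun i _ => Finset.sum_comm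

theorem trace_ptrace2 {m e : Type*} [Fintype m] [DecidableEq m] [Fintype e] [DecidableEq e]
    (ρ : Matrix (m × e) (m × e) ℂ) : (ptrace2 ρ).trace = ρ.trace := by
  simpa using (trace_kronecker_one_mul (1 : Matrix m m ℂ) ρ).symm

theorem mcomm_add_algebraMap [DecidableEq n] (A B : Matrix n n ℂ) (c : ℝ) :
    mcomm (A + algebraMap ℝ _ c) B = mcomm A B := by
  rw [mcomm, mcomm, add_mul, mul_add, Algebra.commutes]; abel

namespace IsHermitian

variable [DecidableEq n] {A : Matrix n n ℂ}

theorem trace_cfc (hA : A.IsHermitian) (f : ℝ → ℝ) :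
    (cfc f A).trace = ∑ i, (f (hA.eigenvalues i) : ℂ) := by
  rw [hA.cfc_eq, IsHermitian.cfc, Unitary.conjStarAlgAut_apply, trace_mul_cycle,
    Unitary.coe_star_mul_self, one_mul, trace_diagonal]
  rfl

theorem trace_cfc_mul_cfc_mul_self (hA : A.IsHermitian) (f : ℝ → ℝ) :
    (cfc f A * cfc f A * A).trace
      = ∑ i, ((hA.eigenvalues i * f (hA.eigenvalues i) ^ 2 : ℝ) : ℂ) := by
  have hcont (g : ℝ → ℝ) : ContinuousOn g (spectrum ℝ A) := A.finite_real_spectrum.continuousOn g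
  have h : cfc f A * cfc f A * A = cfc (fun x => f x * f x * x) A := by
    rw [cfc_mul _ _ A (hcont _) (hcont _), cfc_mul f f A (hcont _) (hcont _), cfc_id' ℝ A]
  rw [h, hA.trace_cfc]
  exact Finset.sum_congr rfl fun i _ => by push_cast; ring

theorem sum_eigenvalues_eq_one (hA : A.IsHermitian) (htr : A.trace = 1) :
    ∑ i, hA.eigenvalues i = 1 := by
  have h := hA.trace_eq_sum_eigenvalues
  rw [htr] at h
  exact_mod_cast (Complex.ofReal_sum _ _ ▸ h).symm

theorem matLog2_kronecker_one_add_algebraMap {e : Type*} [Fintype e] [DecidableEq e]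
    (hA : A.IsHermitian) (c : ℝ) :
    matLog2 A ⊗ₖ (1 : Matrix e e ℂ) + algebraMap ℝ _ c
      = cfc (fun x => Real.logb 2 x + c) A ⊗ₖ (1 : Matrix e e ℂ) := by
  rw [matLog2, dif_pos hA, ← hA.cfc_eq, cfc_add_const _ _ _ (A.finite_real_spectrum.continuousOn _),
    add_kronecker, Algebra.algebraMap_eq_smul_one, Algebra.algebraMap_eq_smul_one, smul_kronecker,
    one_kronecker_one]

end IsHermitian

theorem PosDef.re_trace_cfc_logb_add_sq_mul_le [DecidableEq n] {σ : Matrix n n ℂ}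
    (hσ : σ.PosDef) (htr : σ.trace = 1) (hcard : 2 ≤ Fintype.card n) :
    (cfc (fun x => Real.logb 2 x + Real.logb 2 (Fintype.card n)) σ
        * cfc (fun x => Real.logb 2 x + Real.logb 2 (Fintype.card n)) σ * σ).trace.re
      ≤ (2 * Real.logb 2 (Fintype.card n)) ^ 2 := by
  rw [hσ.isHermitian.trace_cfc_mul_cfc_mul_self, Complex.re_sum]
  simp only [Complex.ofReal_re]
  refine (Real.sum_mul_logb_add_logb_card_sq_le hcard _ hσ.eigenvalues_pos
    (hσ.isHermitian.sum_eigenvalues_eq_one htr)).trans_eq ?_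
  ring

end Matrix

/-- **Lemma 4.** For any density matrix `ρSE` (pure or mixed) whose
reduced state is positive definite, with `d_S ≥ 2`, the entropy rate is bounded by
`4·‖H‖_∞·log₂(d_S)` for every Hermitian `H`. -/
theorem entropy_rate_le_four_log_dim {dS dE : ℕ} (hdS : 2 ≤ dS)
    (ρSE : Matrix (Fin dS × Fin dE) (Fin dS × Fin dE) ℂ)
    (hρ : ρSE.PosSemidef) (htr : ρSE.trace = 1)
    (hpd : (ptrace2 ρSE).PosDef) :
    ∀ H : Matrix (Fin dS × Fin dE) (Fin dS × Fin dE) ℂ, H.IsHermitian →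
      ‖(Matrix.trace (H *
          mcomm (matLog2 (ptrace2 ρSE) ⊗ₖ (1 : Matrix (Fin dE) (Fin dE) ℂ)) ρSE))‖ ≤
        4 * opNorm H * Real.logb 2 (dS : ℝ) := by
  intro H hH
  have hlog := hpd.re_trace_cfc_logb_add_sq_mul_le ((trace_ptrace2 ρSE).trans htr)
    (by simpa using hdS)
  simp only [Fintype.card_fin] at hlog
  set C := Real.logb 2 (dS : ℝ)
  set L := cfc (fun x => Real.logb 2 x + C) (ptrace2 ρSE)
  have hK : (L ⊗ₖ (1 : Matrix (Fin dE) (Fin dE) ℂ)).IsHermitian :=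
    (cfc_predicate _ _ : IsSelfAdjoint L).isHermitian.kronecker isHermitian_one
  have hC : 0 ≤ C := Real.logb_nonneg one_lt_two (by norm_cast; omega)
  have hH0 : 0 ≤ opNorm H := norm_nonneg _
  calc _ = ‖(H * mcomm (L ⊗ₖ 1) ρSE).trace‖ := by
        rw [← hpd.isHermitian.matLog2_kronecker_one_add_algebraMap C, mcomm_add_algebraMap]
    _ ≤ 2 * opNorm H * √ρSE.trace.re * √((L ⊗ₖ 1) * (L ⊗ₖ 1) * ρSE).trace.re :=
        norm_trace_mul_mcomm_le hH hK hρ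
    _ = 2 * opNorm H * √1 * √(L * L * ptrace2 ρSE).trace.re := by
        rw [htr, Complex.one_re, ← mul_kronecker_mul, one_mul, trace_kronecker_one_mul]
    _ ≤ 2 * opNorm H * √1 * √((2 * C) ^ 2) := by gcongr
    _ = 4 * opNorm H * C := by rw [Real.sqrt_one, Real.sqrt_sq (by positivity)]; ring
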